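/- arXiv:1912.00054 — 4 statements merged into one kernel-verified Lean document; each statement's English description precedes it below -/
import Mathlib

section
/- For all 0 < s < t < T, the multifractional Brownian motion kernel K is differentiable with respect to its first variable at (t,s), and ∂K/∂t(t,s) = h′(t) s^{1/2−h(t)} ∫_s^t (y−s)^{h(t)−3/2} y^{h(t)−1/2} ln((y/s − 1)y) dy + s^{1/2−h(t)} (t−s)^{h(t)−3/2} t^{h(t)−1/2}. -/
/-!
Absorbing the prefactor `s^(1/2-h(τ))` into the integral gives
`K(τ,s) = ∫_s^τ w(y)^(h(τ)-3/2) (y/s) dy` with `w(y) = (y/s - 1) y`. Differentiating the exponent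
produces the factor `log w(y)`, which is the logarithm in the formula, and differentiating the
upper limit produces the integrand at `y = t`. Differentiation under the integral sign is
justified by the bound `|r^x log r| ≤ r^p/(x-p) + r^q/(q-x)` for `p < x < q`: the dominating
functions `w^p (y/s)` stay integrable at `y = s` as long as `p > -1`, i.e. `h(t) > 1/2`.
-/

open Real MeasureTheory intervalIntegral Set Filter Topology Interval

lemma abs_rpow_mul_log_le {r x p q : ℝ} (hr : 0 < r) (hp : p < x) (hq : x < q) :
    |r ^ x * log r| ≤ r ^ p / (x - p) + r ^ q / (q - x) := by
  have hp' : 0 < x - p := sub_pos.2 hp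
  have hq' : 0 < q - x := sub_pos.2 hq
  rcases le_total r 1 with hr1 | hr1
  · have hlog : |log r * r ^ (x - p)| ≤ 1 / (x - p) :=
      (abs_log_mul_self_rpow_lt r _ hr hr1 hp').le
    calc |r ^ x * log r| = r ^ p * |log r * r ^ (x - p)| := by
          rw [abs_mul, abs_mul, abs_of_pos (rpow_pos_of_pos hr _),
            abs_of_pos (rpow_pos_of_pos hr _), rpow_sub hr]
          field_simp
      _ ≤ r ^ p / (x - p) := by
          rw [div_eq_mul_one_div]
          exact mul_le_mul_of_nonneg_left hlog (rpow_nonneg hr.le _)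
      _ ≤ _ := le_add_of_nonneg_right (by positivity)
  · have hlog : log r ≤ r ^ (q - x) / (q - x) := log_le_rpow_div hr.le hq'
    calc |r ^ x * log r| = r ^ x * log r :=
          abs_of_nonneg (mul_nonneg (rpow_nonneg hr.le _) (log_nonneg hr1))
      _ ≤ r ^ x * (r ^ (q - x) / (q - x)) :=
          mul_le_mul_of_nonneg_left hlog (rpow_nonneg hr.le _)
      _ = r ^ q / (q - x) := by rw [mul_div_assoc', ← rpow_add hr, add_sub_cancel]
      _ ≤ _ := le_add_of_nonneg_left (by positivity)

theorem hasDerivAt_integral_rpow_mul {w g : ℝ → ℝ} {a b x₀ δ : ℝ} (hδ : 0 < δ)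
    (hw : ∀ y ∈ Ι a b, 0 < w y) (hw_meas : Measurable w)
    (hint : ∀ x ∈ Icc (x₀ - δ) (x₀ + δ), IntervalIntegrable (fun y => w y ^ x * g y) volume a b) :
    HasDerivAt (fun x => ∫ y in a..b, w y ^ x * g y) (∫ y in a..b, w y ^ x₀ * g y * log (w y))
      x₀ := by
  have hball : Metric.ball x₀ (δ / 2) ⊆ Icc (x₀ - δ) (x₀ + δ) := fun x hx => by
    rw [Metric.mem_ball, Real.dist_eq, abs_lt] at hx
    constructor <;> linarith
  have hx₀ : x₀ ∈ Icc (x₀ - δ) (x₀ + δ) := ⟨by linarith, by linarith⟩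
  have hmeas : ∀ x ∈ Icc (x₀ - δ) (x₀ + δ),
      AEStronglyMeasurable (fun y => w y ^ x * g y) (volume.restrict (Ι a b)) := fun x hx =>
    (intervalIntegrable_iff.1 (hint x hx)).aestronglyMeasurable
  set bound : ℝ → ℝ := fun y =>
    2 / δ * (‖w y ^ (x₀ - δ) * g y‖ + ‖w y ^ (x₀ + δ) * g y‖) with hbound
  refine (hasDerivAt_integral_of_dominated_loc_of_deriv_le
    (F' := fun x y => w y ^ x * g y * log (w y)) (bound := bound)
    (Metric.ball_mem_nhds x₀ (half_pos hδ))
    (eventually_of_mem (Metric.ball_mem_nhds x₀ (half_pos hδ)) fun x hx => hmeas x (hball hx))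
    (hint x₀ hx₀)
    ((hmeas x₀ hx₀).mul (hw_meas.log.aestronglyMeasurable)) ?_ ?_ ?_).2
  · refine Eventually.of_forall fun y hy x hx => ?_
    have hwy := hw y hy
    rw [Metric.mem_ball, Real.dist_eq, abs_lt] at hx
    have hlog := abs_rpow_mul_log_le hwy (p := x₀ - δ) (q := x₀ + δ) (x := x)
      (by linarith) (by linarith)
    have hp : w y ^ (x₀ - δ) / (x - (x₀ - δ)) ≤ w y ^ (x₀ - δ) / (δ / 2) :=
      div_le_div_of_nonneg_left (rpow_nonneg hwy.le _) (half_pos hδ) (by linarith)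
    have hq : w y ^ (x₀ + δ) / (x₀ + δ - x) ≤ w y ^ (x₀ + δ) / (δ / 2) :=
      div_le_div_of_nonneg_left (rpow_nonneg hwy.le _) (half_pos hδ) (by linarith)
    calc ‖w y ^ x * g y * log (w y)‖ = |w y ^ x * log (w y)| * |g y| := by
          rw [norm_eq_abs, mul_right_comm, abs_mul]
      _ ≤ (w y ^ (x₀ - δ) / (δ / 2) + w y ^ (x₀ + δ) / (δ / 2)) * |g y| := by
          gcongr
          linarith
      _ = bound y := by
          simp only [hbound, norm_mul, norm_eq_abs, abs_of_pos (rpow_pos_of_pos hwy _)]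
          ring
  · exact (((hint _ ⟨by linarith, by linarith⟩).norm.add
      (hint _ ⟨by linarith, by linarith⟩).norm).const_mul _)
  · refine Eventually.of_forall fun y hy x _ => ?_
    have := ((hasStrictDerivAt_const_rpow (hw y hy) x).hasDerivAt).mul_const (g y)
    exact this.congr_deriv (mul_right_comm _ _ _)

theorem integral_hasDerivAt_right_of_continuousOn_uncurry {E : Type*} [NormedAddCommGroup E]
    [NormedSpace ℝ E] [CompleteSpace E] {G : ℝ → ℝ → E} {t : ℝ} {U : Set (ℝ × ℝ)}
    (hU : U ∈ 𝓝 (t, t)) (hG : ContinuousOn (Function.uncurry G) U) :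
    HasDerivAt (fun τ => ∫ y in t..τ, G τ y) (G t t) t := by
  rw [hasDerivAt_iff_isLittleO, Asymptotics.isLittleO_iff]
  intro ε hε
  obtain ⟨δ, hδ, hball⟩ := Metric.eventually_nhds_iff_ball.1 ((eventually_mem_set.2 hU).and
    ((hG.continuousAt hU).eventually (Metric.closedBall_mem_nhds _ hε)))
  filter_upwards [Metric.ball_mem_nhds t hδ] with τ hτ
  have hseg : ∀ y ∈ [[t, τ]], (τ, y) ∈ Metric.ball (t, t) δ := fun y hy => by
    rw [Metric.mem_ball, Prod.dist_eq, max_lt_iff]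
    exact ⟨hτ, (abs_sub_left_of_mem_uIcc hy).trans_lt hτ⟩
  have hint : IntervalIntegrable (G τ) volume t τ :=
    (hG.comp (Continuous.continuousOn (by fun_prop)) fun y hy => (hball _ (hseg y hy)).1
      ).intervalIntegrable
  calc ‖(∫ y in t..τ, G τ y) - (∫ y in t..t, G t y) - (τ - t) • G t t‖
      = ‖∫ y in t..τ, (G τ y - G t t)‖ := by
        rw [integral_same, sub_zero, integral_sub hint intervalIntegrable_const,
          intervalIntegral.integral_const]
    _ ≤ ε * |τ - t| := norm_integral_le_of_norm_le_const fun y hy =>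
        by simpa [dist_eq_norm] using (hball _ (hseg y (uIoc_subset_uIcc hy))).2
    _ = ε * ‖τ - t‖ := by rw [norm_eq_abs]

noncomputable def mbmIntegrand (s x y : ℝ) : ℝ := ((y / s - 1) * y) ^ x * (y / s)

lemma div_sub_one_mul_self_pos {s y : ℝ} (hs : 0 < s) (hy : s < y) : 0 < (y / s - 1) * y :=
  mul_pos (sub_pos.2 ((one_lt_div hs).2 hy)) (hs.trans hy)

lemma rpow_mul_mbm_kernel_integrand_eq {s x y : ℝ} (hs : 0 < s) (hsy : s ≤ y) :
    s ^ ((1 : ℝ) / 2 - x) * ((y - s) ^ (x - 3 / 2) * y ^ (x - 1 / 2)) =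
      mbmIntegrand s (x - 3 / 2) y := by
  have hy : 0 < y := hs.trans_le hsy
  have hfactor : (y / s - 1) * y = (y - s) * y / s := by field_simp
  rw [mbmIntegrand, hfactor, div_rpow (mul_nonneg (sub_nonneg.2 hsy) hy.le) hs.le,
    mul_rpow (sub_nonneg.2 hsy) hy.le,
    show x - 1 / 2 = (x - 3 / 2) + 1 by ring, show (1 : ℝ) / 2 - x = -(x - 3 / 2) - 1 by ring,
    rpow_add_one hy.ne', rpow_sub_one hs.ne', rpow_neg hs.le]
  field_simp

lemma rpow_mul_integral_mbm_kernel_eq {s v x : ℝ} (hs : 0 < s) (hsv : s ≤ v) (φ : ℝ → ℝ) :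
    s ^ ((1 : ℝ) / 2 - x) * ∫ y in s..v, (y - s) ^ (x - 3 / 2) * y ^ (x - 1 / 2) * φ y =
      ∫ y in s..v, mbmIntegrand s (x - 3 / 2) y * φ y := by
  rw [← intervalIntegral.integral_const_mul]
  refine integral_congr fun y hy => ?_
  rw [uIcc_of_le hsv] at hy
  simp only [← rpow_mul_mbm_kernel_integrand_eq hs hy.1, mul_assoc]

lemma intervalIntegrable_mbmIntegrand {s v x : ℝ} (hs : 0 < s) (hsv : s ≤ v) (hx : -1 < x) :
    IntervalIntegrable (mbmIntegrand s x) volume s v := by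
  have hpow : IntervalIntegrable (fun y => (y - s) ^ x) volume s v := by
    simpa using (intervalIntegrable_rpow' (a := 0) (b := v - s) hx).comp_sub_right s
  have hcont : ContinuousOn (fun y => (y / s) ^ x * (y / s)) [[s, v]] := by
    refine ContinuousOn.mul (ContinuousOn.rpow_const (by fun_prop) fun y hy => Or.inl ?_)
      (by fun_prop)
    rw [uIcc_of_le hsv] at hy
    exact (div_pos (hs.trans_le hy.1) hs).ne'
  refine (hpow.mul_continuousOn hcont).congr fun y hy => ?_
  rw [uIoc_of_le hsv] at hy
  have hfactor : (y / s - 1) * y = (y - s) * (y / s) := by field_simp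
  simp only [mbmIntegrand, hfactor,
    mul_rpow (sub_nonneg.2 hy.1.le) (div_pos (hs.trans hy.1) hs).le, mul_assoc]

lemma continuousOn_mbmIntegrand_comp {s : ℝ} (hs : 0 < s) {c : ℝ → ℝ} (hc : Continuous c) :
    ContinuousOn (Function.uncurry fun τ y => mbmIntegrand s (c τ) y) (univ ×ˢ Ioi s) := by
  refine ContinuousOn.mul (ContinuousOn.rpow (by fun_prop) (by fun_prop) ?_) (by fun_prop)
  rintro ⟨τ, y⟩ ⟨-, hy : s < y⟩
  exact Or.inl (div_sub_one_mul_self_pos hs hy).ne'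

lemma hasDerivAt_integral_mbmIntegrand {s t x₀ : ℝ} (hs : 0 < s) (hst : s ≤ t)
    (hx₀ : -1 < x₀) :
    HasDerivAt (fun x => ∫ y in s..t, mbmIntegrand s x y)
      (∫ y in s..t, mbmIntegrand s x₀ y * log ((y / s - 1) * y)) x₀ := by
  refine hasDerivAt_integral_rpow_mul (δ := (x₀ + 1) / 2) (by linarith) (fun y hy => ?_)
    (by fun_prop) fun x hx => intervalIntegrable_mbmIntegrand hs hst (by linarith [hx.1])
  rw [uIoc_of_le hst] at hy
  exact div_sub_one_mul_self_pos hs hy.1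

theorem mbm_kernel_deriv_general
    (T a b : ℝ) (hab : 1 / 2 < a)
    (h : ℝ → ℝ) (hrange : ∀ t ∈ Set.Icc (0 : ℝ) T, h t ∈ Set.Icc a b)
    (hsmooth : ContDiff ℝ 1 h)
    (K : ℝ → ℝ → ℝ)
    (hK : ∀ t s : ℝ, 0 < s → s ≤ t → t < T →
      K t s = s ^ ((1 : ℝ) / 2 - h t) *
        ∫ y in s..t, (y - s) ^ (h t - 3 / 2) * y ^ (h t - 1 / 2)) :
    ∀ t s : ℝ, 0 < s → s < t → t < T →
      HasDerivAt (fun τ => K τ s)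
        (deriv h t * s ^ ((1 : ℝ) / 2 - h t) *
            (∫ y in s..t,
              (y - s) ^ (h t - 3 / 2) * y ^ (h t - 1 / 2) * Real.log ((y / s - 1) * y))
          + s ^ ((1 : ℝ) / 2 - h t) * (t - s) ^ (h t - 3 / 2) * t ^ (h t - 1 / 2)) t := by
  intro t s hs hst htT
  have hexp : ∀ τ ∈ Ioo s T, -1 < h τ - 3 / 2 := fun τ hτ => by
    linarith [(hrange τ ⟨hs.le.trans hτ.1.le, hτ.2.le⟩).1]
  have hK_eq : (fun τ => K τ s) =ᶠ[𝓝 t] fun τ => (∫ y in s..t, mbmIntegrand s (h τ - 3 / 2) y) +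
      ∫ y in t..τ, mbmIntegrand s (h τ - 3 / 2) y := by
    filter_upwards [Ioo_mem_nhds hst htT] with τ hτ
    have hint := fun v (hv : s ≤ v) => intervalIntegrable_mbmIntegrand hs hv (hexp τ hτ)
    rw [integral_add_adjacent_intervals (hint t hst.le) ((hint t hst.le).symm.trans
      (hint τ hτ.1.le)), hK τ s hs hτ.1.le hτ.2]
    simpa only [mul_one] using rpow_mul_integral_mbm_kernel_eq hs hτ.1.le (x := h τ) fun _ => 1
  have hD₁ := (hasDerivAt_integral_mbmIntegrand hs hst.le (hexp t ⟨hst, htT⟩)).comp t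
    ((hsmooth.differentiable one_ne_zero t).hasDerivAt.sub_const (3 / 2))
  have hD₂ := integral_hasDerivAt_right_of_continuousOn_uncurry
    (prod_mem_nhds univ_mem (Ioi_mem_nhds hst))
    (continuousOn_mbmIntegrand_comp hs (c := fun τ => h τ - 3 / 2)
      (hsmooth.continuous.sub continuous_const))
  refine ((hD₁.add hD₂).congr_of_eventuallyEq hK_eq).congr_deriv ?_
  rw [mul_assoc, rpow_mul_integral_mbm_kernel_eq hs hst.le, mul_assoc (s ^ _),
    rpow_mul_mbm_kernel_integrand_eq hs hst.le]
  ring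

/-- For the multifractional Brownian motion kernel
`K(t,s) = s^(1/2−h(t)) ∫_s^t (y−s)^(h(t)−3/2) y^(h(t)−1/2) dy` (for `0 < s ≤ t < T`),
for all `0 < s < t < T` the map `τ ↦ K(τ,s)` is differentiable at `t` with derivative
`h′(t) s^(1/2−h(t)) ∫_s^t (y−s)^(h(t)−3/2) y^(h(t)−1/2) ln((y/s−1)y) dy
  + s^(1/2−h(t)) (t−s)^(h(t)−3/2) t^(h(t)−1/2)`. -/
theorem mbm_kernel_deriv
    (T a b : ℝ) (hT : 0 < T) (hab : 1 / 2 < a) (hab' : a ≤ b) (hb : b < 1)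
    (h : ℝ → ℝ) (hrange : ∀ t ∈ Set.Icc (0 : ℝ) T, h t ∈ Set.Icc a b)
    (hsmooth : ContDiff ℝ 1 h) (M : ℝ) (hM : ∀ t, |deriv h t| ≤ M)
    (K : ℝ → ℝ → ℝ)
    (hK : ∀ t s : ℝ, 0 < s → s ≤ t → t < T →
      K t s = s ^ ((1 : ℝ) / 2 - h t) *
        ∫ y in s..t, (y - s) ^ (h t - 3 / 2) * y ^ (h t - 1 / 2))
    (hKvolterra : ∀ t s : ℝ, t < s → K t s = 0) :
    ∀ t s : ℝ, 0 < s → s < t → t < T →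
      HasDerivAt (fun τ => K τ s)
        (deriv h t * s ^ ((1 : ℝ) / 2 - h t) *
            (∫ y in s..t,
              (y - s) ^ (h t - 3 / 2) * y ^ (h t - 1 / 2) * Real.log ((y / s - 1) * y))
          + s ^ ((1 : ℝ) / 2 - h t) * (t - s) ^ (h t - 3 / 2) * t ^ (h t - 1 / 2)) t :=
  mbm_kernel_deriv_general T a b hab h hrange hsmooth K hK
end

section
/- For every T > 0, 0 < α < 1/2, 0 < β < 1/2 and 1 < p < 1/(1−α), one has ∫_0^T (∫_s^T (t−s)^{p(α−1)} (t/s)^{pβ} dt)^{2/p} ds ≤ (p(α−1)+1)^{−2/p} · T^{2(α−1)+2/p+1} · B(1−2β, 2(α−1)+2/p+1); in particular the left-hand side is finite. -/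
/-!
Write `a = p(α−1) > −1`, `b = pβ ≥ 0`, `q = 2/p`. For `0 < s ≤ T`, bounding `(t/s)^b` by
`(T/s)^b` gives `∫_s^T (t−s)^a (t/s)^b dt ≤ (T/s)^b (T−s)^(a+1)/(a+1)`. Raised to the power `q`,
this is `(a+1)^(−q) T^(bq)` times `s^(−bq) (T−s)^((a+1)q)`, and the substitution `s = T u` turns
the integral of the latter over `[0, T]` into `T^(1−bq+(a+1)q) B(1−bq, (a+1)q+1)`, which is
finite because `bq = 2β < 1`.
-/

open Real MeasureTheory intervalIntegral

/-- The Euler Beta function `B(x,y) = ∫_0^1 u^(x−1)(1−u)^(y−1) du`. -/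
noncomputable def eulerBeta (x y : ℝ) : ℝ :=
  ∫ u in (0 : ℝ)..1, u ^ (x - 1) * (1 - u) ^ (y - 1)

open Set Function

theorem MeasureTheory.StronglyMeasurable.intervalIntegral_left {E : Type*}
    [NormedAddCommGroup E] [NormedSpace ℝ E] {F : ℝ → ℝ → E}
    (hF : StronglyMeasurable (uncurry F)) (c : ℝ) :
    StronglyMeasurable fun s => ∫ t in s..c, F s t := by
  have hsection : ∀ S : Set (ℝ × ℝ), MeasurableSet S →
      StronglyMeasurable fun s => ∫ t, S.indicator (uncurry F) (s, t) :=
    fun S hS => (hF.indicator hS).integral_prod_right'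
  have hIoc : ∀ s a b : ℝ, ∫ t in Ioc a b, F s t = ∫ t, (Ioc a b).indicator (F s) t :=
    fun s a b => (MeasureTheory.integral_indicator measurableSet_Ioc).symm
  have hbelow : MeasurableSet {p : ℝ × ℝ | p.2 ∈ Ioc p.1 c} :=
    (_root_.measurableSet_lt measurable_fst measurable_snd).inter
      (_root_.measurableSet_le measurable_snd measurable_const)
  have habove : MeasurableSet {p : ℝ × ℝ | p.2 ∈ Ioc c p.1} :=
    (_root_.measurableSet_lt measurable_const measurable_snd).inter
      (_root_.measurableSet_le measurable_snd measurable_fst)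
  -- `∫ t in s..c` is a difference of integrals over the `s`-sections of two measurable sets.
  convert (hsection _ hbelow).sub (hsection _ habove) using 2 with s
  rw [intervalIntegral, hIoc, hIoc]
  rfl

theorem integral_sub_rpow {a : ℝ} (ha : -1 < a) (s T : ℝ) :
    ∫ t in s..T, (t - s) ^ a = (T - s) ^ (a + 1) / (a + 1) := by
  rw [integral_comp_sub_right (· ^ a), sub_self, integral_rpow (Or.inl ha),
    zero_rpow (by linarith), sub_zero]

theorem intervalIntegrable_sub_rpow {a : ℝ} (ha : -1 < a) (s T : ℝ) :
    IntervalIntegrable (fun t => (t - s) ^ a) volume s T := by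
  simpa using (intervalIntegrable_rpow' (a := 0) (b := T - s) ha).comp_sub_right s

theorem integral_sub_rpow_mul_div_rpow_nonneg (a b : ℝ) {s T : ℝ} (hs : 0 ≤ s) (hsT : s ≤ T) :
    0 ≤ ∫ t in s..T, (t - s) ^ a * (t / s) ^ b :=
  integral_nonneg hsT fun t ht =>
    mul_nonneg (rpow_nonneg (by linarith [ht.1]) a)
      (rpow_nonneg (div_nonneg (by linarith [ht.1]) hs) b)

theorem integral_sub_rpow_mul_div_rpow_le {a b s T : ℝ} (ha : -1 < a) (hb : 0 ≤ b) (hs : 0 < s)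
    (hsT : s ≤ T) :
    ∫ t in s..T, (t - s) ^ a * (t / s) ^ b ≤ (T / s) ^ b * ((T - s) ^ (a + 1) / (a + 1)) := by
  have hpow : IntervalIntegrable (fun t => (t - s) ^ a) volume s T :=
    intervalIntegrable_sub_rpow ha s T
  calc ∫ t in s..T, (t - s) ^ a * (t / s) ^ b
      ≤ ∫ t in s..T, (t - s) ^ a * (T / s) ^ b := by
        refine integral_mono_on hsT
          (hpow.mul_continuousOn
            ((continuous_id.div_const s).rpow_const fun _ => Or.inr hb).continuousOn)
          (hpow.mul_continuousOn continuousOn_const) fun t ht => ?_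
        exact mul_le_mul_of_nonneg_left
          (rpow_le_rpow (div_nonneg (by linarith [ht.1]) hs.le) (by gcongr; exact ht.2) hb)
          (rpow_nonneg (by linarith [ht.1]) a)
    _ = (T / s) ^ b * ((T - s) ^ (a + 1) / (a + 1)) := by
        rw [intervalIntegral.integral_mul_const, integral_sub_rpow ha, mul_comm]

theorem rpow_integral_sub_rpow_mul_div_rpow_le {a b q s T : ℝ} (ha : -1 < a) (hb : 0 ≤ b)
    (hq : 0 ≤ q) (hs : 0 < s) (hsT : s ≤ T) :
    (∫ t in s..T, (t - s) ^ a * (t / s) ^ b) ^ q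
      ≤ (a + 1) ^ (-q) * T ^ (b * q) * (s ^ (-(b * q)) * (T - s) ^ ((a + 1) * q)) := by
  have hT : 0 ≤ T := hs.le.trans hsT
  have hTs : 0 ≤ T - s := sub_nonneg.2 hsT
  have ha1 : 0 ≤ a + 1 := by linarith
  calc (∫ t in s..T, (t - s) ^ a * (t / s) ^ b) ^ q
      ≤ ((T / s) ^ b * ((T - s) ^ (a + 1) / (a + 1))) ^ q :=
        rpow_le_rpow (integral_sub_rpow_mul_div_rpow_nonneg a b hs.le hsT)
          (integral_sub_rpow_mul_div_rpow_le ha hb hs hsT) hq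
    _ = (a + 1) ^ (-q) * T ^ (b * q) * (s ^ (-(b * q)) * (T - s) ^ ((a + 1) * q)) := by
        rw [mul_rpow (by positivity) (by positivity), div_rpow (by positivity) ha1,
          ← rpow_mul (by positivity), ← rpow_mul hTs, div_rpow hT hs.le, rpow_neg ha1,
          rpow_neg hs.le]
        ring

theorem integral_rpow_mul_sub_rpow {T : ℝ} (hT : 0 < T) (x y : ℝ) :
    ∫ s in (0 : ℝ)..T, s ^ (x - 1) * (T - s) ^ (y - 1) = T ^ (x + y - 1) * eulerBeta x y := by
  have hscale : ∀ u ∈ uIcc (0 : ℝ) 1, (T * u) ^ (x - 1) * (T - T * u) ^ (y - 1)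
      = T ^ (x - 1) * T ^ (y - 1) * (u ^ (x - 1) * (1 - u) ^ (y - 1)) := by
    intro u hu
    rw [uIcc_of_le zero_le_one] at hu
    rw [show T - T * u = T * (1 - u) by ring, mul_rpow hT.le hu.1,
      mul_rpow hT.le (by linarith [hu.2])]
    ring
  have hsub := smul_integral_comp_mul_left (a := 0) (b := 1)
    (fun s => s ^ (x - 1) * (T - s) ^ (y - 1)) T
  rw [mul_zero, mul_one] at hsub
  rw [← hsub, integral_congr hscale,
    intervalIntegral.integral_const_mul, eulerBeta, smul_eq_mul, ← mul_assoc, ← mul_assoc,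
    show x + y - 1 = 1 + (x - 1) + (y - 1) by ring, rpow_add hT, rpow_add hT, rpow_one]

theorem intervalIntegrable_rpow_mul_sub_rpow {T x y : ℝ} (hT : 0 < T) (hx : 0 < x) (hy : 0 < y) :
    IntervalIntegrable (fun s => s ^ (x - 1) * (T - s) ^ (y - 1)) volume 0 T := by
  have hleft :
      IntervalIntegrable (fun s => s ^ (x - 1) * (T - s) ^ (y - 1)) volume 0 (T / 2) := by
    refine (intervalIntegrable_rpow' (by linarith)).mul_continuousOn
      (ContinuousOn.rpow_const (continuousOn_const.sub continuousOn_id) fun s hs => Or.inl ?_)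
    rw [uIcc_of_le (by linarith)] at hs
    linarith [hs.2]
  have hright :
      IntervalIntegrable (fun s => s ^ (x - 1) * (T - s) ^ (y - 1)) volume (T / 2) T := by
    have h := ((intervalIntegrable_rpow' (a := 0) (b := T / 2) (r := y - 1)
      (by linarith)).comp_sub_left T).symm
    rw [sub_zero, show T - T / 2 = T / 2 by ring] at h
    refine h.continuousOn_mul
      (ContinuousOn.rpow_const continuousOn_id fun s hs => Or.inl ?_)
    rw [uIcc_of_le (by linarith)] at hs
    linarith [hs.1]
  exact hleft.trans hright

theorem intervalIntegrable_and_integral_rpow_integral_le_eulerBeta {a b q T : ℝ} (hT : 0 < T)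
    (ha : -1 < a) (hb : 0 ≤ b) (hq : 0 ≤ q) (hbq : b * q < 1) :
    IntervalIntegrable (fun s => (∫ t in s..T, (t - s) ^ a * (t / s) ^ b) ^ q) volume 0 T ∧
      ∫ s in (0 : ℝ)..T, (∫ t in s..T, (t - s) ^ a * (t / s) ^ b) ^ q
        ≤ (a + 1) ^ (-q) * T ^ ((a + 1) * q + 1) * eulerBeta (1 - b * q) ((a + 1) * q + 1) := by
  set x := 1 - b * q
  set y := (a + 1) * q + 1
  set bound := fun s : ℝ => (a + 1) ^ (-q) * T ^ (b * q) * (s ^ (x - 1) * (T - s) ^ (y - 1))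
  have hbound : ∀ s ∈ Ioc 0 T,
      (∫ t in s..T, (t - s) ^ a * (t / s) ^ b) ^ q ≤ bound s := fun s hs => by
    simpa only [bound, x, y, sub_sub_cancel_left, add_sub_cancel_right]
      using rpow_integral_sub_rpow_mul_div_rpow_le ha hb hq hs.1 hs.2
  have hbound_int : IntervalIntegrable bound volume 0 T :=
    (intervalIntegrable_rpow_mul_sub_rpow hT (by linarith) (by nlinarith)).const_mul _
  have hmeas : StronglyMeasurable fun s => ∫ t in s..T, (t - s) ^ a * (t / s) ^ b :=
    (by fun_prop : Measurable _).stronglyMeasurable.intervalIntegral_left T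
  have hint : IntervalIntegrable (fun s => (∫ t in s..T, (t - s) ^ a * (t / s) ^ b) ^ q)
      volume 0 T := by
    refine hbound_int.mono_fun (hmeas.measurable.pow_const q).aestronglyMeasurable ?_
    rw [uIoc_of_le hT.le]
    refine ae_restrict_of_forall_mem measurableSet_Ioc fun s hs => ?_
    have hpos := rpow_nonneg (integral_sub_rpow_mul_div_rpow_nonneg a b hs.1.le hs.2) q
    dsimp only
    rw [norm_of_nonneg hpos, norm_of_nonneg (hpos.trans (hbound s hs))]
    exact hbound s hs
  refine ⟨hint, ?_⟩
  calc ∫ s in (0 : ℝ)..T, (∫ t in s..T, (t - s) ^ a * (t / s) ^ b) ^ q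
      ≤ ∫ s in (0 : ℝ)..T, bound s := by
        rw [integral_of_le hT.le, integral_of_le hT.le]
        exact setIntegral_mono_on hint.1 hbound_int.1 measurableSet_Ioc hbound
    _ = (a + 1) ^ (-q) * T ^ (b * q) * (T ^ (x + y - 1) * eulerBeta x y) := by
        rw [intervalIntegral.integral_const_mul, integral_rpow_mul_sub_rpow hT]
    _ = (a + 1) ^ (-q) * T ^ y * eulerBeta x y := by
        rw [mul_assoc _ (T ^ (b * q)), ← mul_assoc (T ^ (b * q)), ← rpow_add hT,
          show b * q + (x + y - 1) = y by simp only [x]; ring]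
        ring

theorem double_integral_beta_bound_general
    (T α β p : ℝ) (hT : 0 < T)
    (hβ : 0 < β) (hβ' : β < 1 / 2) (hp : 1 < p) (hp' : p < 1 / (1 - α)) :
    IntervalIntegrable
        (fun s => (∫ t in s..T, (t - s) ^ (p * (α - 1)) * (t / s) ^ (p * β)) ^ (2 / p))
        MeasureTheory.volume 0 T ∧
      (∫ s in (0 : ℝ)..T,
          (∫ t in s..T, (t - s) ^ (p * (α - 1)) * (t / s) ^ (p * β)) ^ (2 / p))
        ≤ (p * (α - 1) + 1) ^ (-(2 / p)) * T ^ (2 * (α - 1) + 2 / p + 1) *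
            eulerBeta (1 - 2 * β) (2 * (α - 1) + 2 / p + 1) := by
  have hp0 : 0 < p := one_pos.trans hp
  have hα : 0 < 1 - α := one_div_pos.mp (one_pos.trans (hp.trans hp'))
  have ha : -1 < p * (α - 1) := by nlinarith [(lt_div_iff₀ hα).mp hp']
  have hbq : p * β * (2 / p) = 2 * β := by field_simp
  have hy : (p * (α - 1) + 1) * (2 / p) + 1 = 2 * (α - 1) + 2 / p + 1 := by field_simp
  have key := intervalIntegrable_and_integral_rpow_integral_le_eulerBeta (b := p * β) (q := 2 / p)
    hT ha (by positivity) (by positivity) (by linarith)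
  rwa [hbq, hy] at key

/-- For `T > 0`, `0 < α < 1/2`, `0 < β < 1/2` and `1 < p < 1/(1−α)`,
`∫_0^T (∫_s^T (t−s)^(p(α−1)) (t/s)^(pβ) dt)^(2/p) ds
  ≤ (p(α−1)+1)^(−2/p) T^(2(α−1)+2/p+1) B(1−2β, 2(α−1)+2/p+1)`,
and in particular the left-hand side is finite (the integrand is integrable). -/
theorem double_integral_beta_bound
    (T α β p : ℝ) (hT : 0 < T) (hα : 0 < α) (hα' : α < 1 / 2)
    (hβ : 0 < β) (hβ' : β < 1 / 2) (hp : 1 < p) (hp' : p < 1 / (1 - α)) :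
    IntervalIntegrable
        (fun s => (∫ t in s..T, (t - s) ^ (p * (α - 1)) * (t / s) ^ (p * β)) ^ (2 / p))
        MeasureTheory.volume 0 T ∧
      (∫ s in (0 : ℝ)..T,
          (∫ t in s..T, (t - s) ^ (p * (α - 1)) * (t / s) ^ (p * β)) ^ (2 / p))
        ≤ (p * (α - 1) + 1) ^ (-(2 / p)) * T ^ (2 * (α - 1) + 2 / p + 1) *
            eulerBeta (1 - 2 * β) (2 * (α - 1) + 2 / p + 1) :=
  double_integral_beta_bound_general T α β p hT hβ hβ' hp hp'
end

section
/- For all bounded measurable functions a, b : [0,T] → ℝ, all the integrals below converge absolutely and ∫_0^T ( ∫_t^T a_r (∂K/∂t)(r,t) dr ) ( ∫_t^T b_s (∂K/∂t)(s,t) ds ) dt = ∫_0^T ∫_0^T φ(r,s) a_r b_s ds dr. -/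
/-!
Put `G(r,u) = K'(r,u)` on `0 < u < r < T` and `0` elsewhere. By (H2),
`|G(r,u)| ≤ c T^β (r-u)^(α-1) u^(-β)`, so `∫ |a_r G(r,u)| dr ≲ u^(-β)` and the `u`-marginal of
`|a_r G(r,u) b_s G(s,u)|` on `(0,T)³` is `≲ u^(-2β)`, integrable because `β < 1/2`. Fubini then
exchanges the `u`-integral with the `(r,s)`-integral. The integrability claims at a fixed `r`
(or a fixed pair `r ≠ s`) reduce to the Beta-type integral `∫_0^r u^(-2β) (r-u)^(α-1) du < ∞`.
-/

open Real MeasureTheory intervalIntegral Set Function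

theorem integrableOn_iff_intervalIntegrable_of_eqOn_Ioo {f g : ℝ → ℝ} {s : Set ℝ} {a b : ℝ}
    (hs : MeasurableSet s) (hab : a ≤ b) (hsub : Ioo a b ⊆ s) (hfg : EqOn g f (Ioo a b))
    (hg : ∀ x ∈ s \ Ioo a b, g x = 0) :
    IntegrableOn g s ↔ IntervalIntegrable f volume a b := by
  rw [intervalIntegrable_iff_integrableOn_Ioo_of_le hab,
    ← integrableOn_congr_fun hfg measurableSet_Ioo]
  exact ⟨fun h => h.mono_set hsub, fun h => h.of_forall_sdiff_eq_zero hs hg⟩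

theorem setIntegral_eq_intervalIntegral_of_eqOn_Ioo {f g : ℝ → ℝ} {s : Set ℝ} {a b : ℝ}
    (hs : MeasurableSet s) (hab : a ≤ b) (hsub : Ioo a b ⊆ s) (hfg : EqOn g f (Ioo a b))
    (hg : ∀ x ∈ s \ Ioo a b, g x = 0) :
    ∫ x in s, g x = ∫ x in a..b, f x := by
  rw [setIntegral_eq_of_subset_of_forall_sdiff_eq_zero hs hsub hg,
    setIntegral_congr_fun measurableSet_Ioo hfg, integral_of_le hab,
    integral_Ioc_eq_integral_Ioo]

theorem integrableOn_rpow_mul_sub_rpow {p q r : ℝ} (hp : -1 < p) (hq : -1 < q) :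
    IntegrableOn (fun u => u ^ p * (r - u) ^ q) (Ioo 0 r) := by
  rcases le_or_gt r 0 with hr | hr
  · simp [Ioo_eq_empty_of_le hr]
  have hleft : IntegrableOn (fun u => u ^ p * (r - u) ^ q) (Icc 0 (r / 2)) := by
    refine IntegrableOn.mul_continuousOn ?_ ?_ isCompact_Icc
    · exact (intervalIntegrable_iff_integrableOn_Icc_of_le (by linarith)).mp
        (intervalIntegrable_rpow' hp)
    · exact (continuousOn_const.sub continuousOn_id).rpow_const
        fun u hu => Or.inl (by simp only [Pi.sub_apply, id]; linarith [hu.2])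
  have hright : IntegrableOn (fun u => u ^ p * (r - u) ^ q) (Icc (r / 2) r) := by
    refine IntegrableOn.continuousOn_mul ?_ ?_ isCompact_Icc
    · exact continuousOn_id.rpow_const fun u hu => Or.inl (by simp only [id]; linarith [hu.1])
    · have h := (intervalIntegrable_rpow' (a := 0) (b := r / 2) hq).comp_sub_left r
      rw [sub_zero, show r - r / 2 = r / 2 by ring] at h
      exact (intervalIntegrable_iff_integrableOn_Icc_of_le (by linarith)).mp h.symm
  exact (hleft.union hright).mono_set fun u hu => by
    rcases le_total u (r / 2) with h | h
    exacts [Or.inl ⟨hu.1.le, h⟩, Or.inr ⟨h, hu.2.le⟩]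

theorem integrableOn_rpow_neg_mul_self {β T : ℝ} (hβ : β < 1 / 2) :
    IntegrableOn (fun t => t ^ (-β) * t ^ (-β)) (Ioo 0 T) :=
  ((intervalIntegrable_rpow' (a := 0) (b := T) (r := -β + -β) (by linarith)).1.mono_set
    Ioo_subset_Ioc_self).congr_fun (fun t ht => rpow_add ht.1 _ _) measurableSet_Ioo

noncomputable def volterraMajorant (α β r u : ℝ) : ℝ :=
  if 0 < u ∧ u < r then (r - u) ^ (α - 1) * u ^ (-β) else 0

section volterraMajorant

variable {α β T r s u : ℝ}

theorem volterraMajorant_of_mem (hu : 0 < u) (hur : u < r) :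
    volterraMajorant α β r u = (r - u) ^ (α - 1) * u ^ (-β) :=
  if_pos ⟨hu, hur⟩

theorem volterraMajorant_eq_zero (h : ¬(0 < u ∧ u < r)) : volterraMajorant α β r u = 0 :=
  if_neg h

theorem volterraMajorant_nonneg : 0 ≤ volterraMajorant α β r u := by
  unfold volterraMajorant
  split_ifs with h
  · exact mul_nonneg (rpow_nonneg (by linarith [h.2]) _) (rpow_nonneg h.1.le _)
  · exact le_rfl

theorem volterraMajorant_mul_le (hα : α ≤ 1) (hrs : r < s) :
    volterraMajorant α β r u * volterraMajorant α β s u ≤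
      (s - r) ^ (α - 1) * (volterraMajorant α β r u * u ^ (-β)) := by
  by_cases h : 0 < u ∧ u < r
  · rw [volterraMajorant_of_mem h.1 h.2, volterraMajorant_of_mem h.1 (h.2.trans hrs)]
    have hsu : (s - u) ^ (α - 1) ≤ (s - r) ^ (α - 1) :=
      rpow_le_rpow_of_nonpos (by linarith) (by linarith [h.2]) (by linarith)
    have hpos : 0 ≤ (r - u) ^ (α - 1) * u ^ (-β) * u ^ (-β) :=
      mul_nonneg (mul_nonneg (rpow_nonneg (by linarith [h.2]) _) (rpow_nonneg h.1.le _))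
        (rpow_nonneg h.1.le _)
    calc (r - u) ^ (α - 1) * u ^ (-β) * ((s - u) ^ (α - 1) * u ^ (-β))
        = (s - u) ^ (α - 1) * ((r - u) ^ (α - 1) * u ^ (-β) * u ^ (-β)) := by ring
      _ ≤ (s - r) ^ (α - 1) * ((r - u) ^ (α - 1) * u ^ (-β) * u ^ (-β)) :=
        mul_le_mul_of_nonneg_right hsu hpos
  · simp [volterraMajorant_eq_zero h]

theorem integrableOn_volterraMajorant_left (hα : 0 < α) (hu : u ∈ Ioo 0 T) :
    IntegrableOn (fun r => volterraMajorant α β r u) (Ioo 0 T) := by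
  rw [integrableOn_iff_intervalIntegrable_of_eqOn_Ioo (f := fun r => (r - u) ^ (α - 1) * u ^ (-β))
    measurableSet_Ioo hu.2.le (Ioo_subset_Ioo_left hu.1.le)
    (fun r hr => volterraMajorant_of_mem hu.1 hr.1)
    (fun r hr => volterraMajorant_eq_zero fun h => hr.2 ⟨h.2, hr.1.2⟩)]
  refine IntervalIntegrable.mul_const ?_ _
  simpa using (intervalIntegrable_rpow' (a := 0) (b := T - u) (by linarith)).comp_sub_right u

theorem setIntegral_volterraMajorant_left_le (hα : 0 < α) (hu : u ∈ Ioo 0 T) :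
    ∫ r in Ioo 0 T, volterraMajorant α β r u ≤ T ^ α / α * u ^ (-β) := by
  rw [setIntegral_eq_intervalIntegral_of_eqOn_Ioo (f := fun r => (r - u) ^ (α - 1) * u ^ (-β))
    measurableSet_Ioo hu.2.le (Ioo_subset_Ioo_left hu.1.le)
    (fun r hr => volterraMajorant_of_mem hu.1 hr.1)
    (fun r hr => volterraMajorant_eq_zero fun h => hr.2 ⟨h.2, hr.1.2⟩),
    intervalIntegral.integral_mul_const, integral_comp_sub_right (fun x => x ^ (α - 1)),
    sub_self, integral_rpow (Or.inl (by linarith)), sub_add_cancel,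
    zero_rpow hα.ne', sub_zero]
  gcongr
  · exact rpow_nonneg hu.1.le _
  · linarith [hu.2]
  · linarith [hu.1]

theorem integrableOn_volterraMajorant_mul_rpow (hα : 0 < α) (hβ : β < 1 / 2)
    (hr : r ∈ Ioo 0 T) :
    IntegrableOn (fun u => volterraMajorant α β r u * u ^ (-β)) (Ioo 0 T) := by
  rw [integrableOn_iff_intervalIntegrable_of_eqOn_Ioo
    (f := fun u => u ^ (-(2 * β)) * (r - u) ^ (α - 1))
    measurableSet_Ioo hr.1.le (Ioo_subset_Ioo_right hr.2.le)
    (fun u hu => by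
      rw [volterraMajorant_of_mem hu.1 hu.2, mul_assoc, ← rpow_add hu.1]
      ring_nf)
    (fun u hu => by
      rw [volterraMajorant_eq_zero fun h => hu.2 ⟨h.1, h.2⟩, zero_mul]),
    intervalIntegrable_iff_integrableOn_Ioo_of_le hr.1.le]
  exact integrableOn_rpow_mul_sub_rpow (by linarith) (by linarith)

end volterraMajorant

section DominatedKernel

variable {T α β κ : ℝ} {G : ℝ → ℝ → ℝ}

local notation "μT" => volume.restrict (Ioo (0 : ℝ) T)

theorem norm_mul_kernel_le (hG : ∀ r u, |G r u| ≤ κ * volterraMajorant α β r u)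
    {f : ℝ → ℝ} {C r : ℝ} (hf : |f r| ≤ C) (u : ℝ) :
    ‖f r * G r u‖ ≤ C * (κ * volterraMajorant α β r u) := by
  rw [norm_mul]
  exact mul_le_mul hf (hG r u) (abs_nonneg _) ((abs_nonneg _).trans hf)

theorem integrable_mul_kernel_left (hGm : Measurable (uncurry G))
    (hG : ∀ r u, |G r u| ≤ κ * volterraMajorant α β r u) (hα : 0 < α)
    {f : ℝ → ℝ} (hfm : Measurable f) {C : ℝ} (hf : ∀ r ∈ Ioo 0 T, |f r| ≤ C)
    {u : ℝ} (hu : u ∈ Ioo 0 T) :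
    Integrable (fun r => f r * G r u) μT :=
  (((integrableOn_volterraMajorant_left hα hu).const_mul κ).const_mul C).mono'
    (hfm.mul hGm.of_uncurry_right).aestronglyMeasurable
    ((ae_restrict_iff' measurableSet_Ioo).mpr (ae_of_all _ fun r hr =>
      norm_mul_kernel_le hG (hf r hr) u))

theorem integral_norm_mul_kernel_left_le (hG : ∀ r u, |G r u| ≤ κ * volterraMajorant α β r u)
    (hα : 0 < α) (hκ : 0 ≤ κ) {f : ℝ → ℝ} {C : ℝ} (hf : ∀ r ∈ Ioo 0 T, |f r| ≤ C)
    {u : ℝ} (hu : u ∈ Ioo 0 T) :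
    ∫ r, ‖f r * G r u‖ ∂μT ≤ C * κ * (T ^ α / α) * u ^ (-β) := by
  have hC : 0 ≤ C := (abs_nonneg _).trans (hf u hu)
  calc ∫ r, ‖f r * G r u‖ ∂μT
      ≤ ∫ r, C * (κ * volterraMajorant α β r u) ∂μT :=
        integral_mono_of_nonneg (ae_of_all _ fun r => norm_nonneg _)
          (((integrableOn_volterraMajorant_left hα hu).const_mul κ).const_mul C)
          ((ae_restrict_iff' measurableSet_Ioo).mpr (ae_of_all _ fun r hr =>
            norm_mul_kernel_le hG (hf r hr) u))
    _ = C * κ * ∫ r in Ioo 0 T, volterraMajorant α β r u := by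
        rw [MeasureTheory.integral_const_mul, MeasureTheory.integral_const_mul, mul_assoc]
    _ ≤ C * κ * (T ^ α / α) * u ^ (-β) := by
        rw [mul_assoc (C * κ)]
        exact mul_le_mul_of_nonneg_left (setIntegral_volterraMajorant_left_le hα hu)
          (mul_nonneg hC hκ)

theorem integrable_kernel_mul_kernel (hGm : Measurable (uncurry G))
    (hG : ∀ r u, |G r u| ≤ κ * volterraMajorant α β r u) (hα : 0 < α) (hα1 : α ≤ 1)
    (hβ : β < 1 / 2) {r s : ℝ} (hr : r ∈ Ioo 0 T) (hs : s ∈ Ioo 0 T) (hrs : r ≠ s) :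
    Integrable (fun u => G r u * G s u) μT := by
  wlog h : r < s generalizing r s
  · exact (this hs hr hrs.symm (hrs.lt_or_gt.resolve_left h)).congr
      (ae_of_all _ fun u => mul_comm _ _)
  refine (((integrableOn_volterraMajorant_mul_rpow hα hβ hr).const_mul
    ((s - r) ^ (α - 1))).const_mul (κ * κ)).mono'
    (hGm.of_uncurry_left.mul hGm.of_uncurry_left).aestronglyMeasurable
    (ae_of_all _ fun u => ?_)
  calc ‖G r u * G s u‖ = |G r u| * |G s u| := norm_mul _ _
    _ ≤ κ * volterraMajorant α β r u * (κ * volterraMajorant α β s u) :=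
        mul_le_mul (hG r u) (hG s u) (abs_nonneg _) ((abs_nonneg _).trans (hG r u))
    _ = κ * κ * (volterraMajorant α β r u * volterraMajorant α β s u) := by ring
    _ ≤ κ * κ * ((s - r) ^ (α - 1) * (volterraMajorant α β r u * u ^ (-β))) :=
        mul_le_mul_of_nonneg_left (volterraMajorant_mul_le hα1 h) (mul_self_nonneg κ)

theorem integrable_mul_kernel_mul_mul_kernel (hGm : Measurable (uncurry G))
    (hG : ∀ r u, |G r u| ≤ κ * volterraMajorant α β r u) (hα : 0 < α) (hβ : β < 1 / 2)
    (hκ : 0 ≤ κ) {f g : ℝ → ℝ} (hfm : Measurable f) (hgm : Measurable g) {Cf Cg : ℝ}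
    (hf : ∀ r ∈ Ioo 0 T, |f r| ≤ Cf) (hg : ∀ s ∈ Ioo 0 T, |g s| ≤ Cg) :
    Integrable (fun p : ℝ × ℝ × ℝ => f p.2.1 * G p.2.1 p.1 * (g p.2.2 * G p.2.2 p.1))
      ((μT).prod ((μT).prod μT)) := by
  have hm : Measurable fun p : ℝ × ℝ × ℝ => f p.2.1 * G p.2.1 p.1 * (g p.2.2 * G p.2.2 p.1) :=
    ((hfm.comp measurable_snd.fst).mul (hGm.comp (measurable_snd.fst.prodMk measurable_fst))).mul
      ((hgm.comp measurable_snd.snd).mul (hGm.comp (measurable_snd.snd.prodMk measurable_fst)))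
  refine (integrable_prod_iff hm.aestronglyMeasurable).mpr ⟨?_, ?_⟩
  · filter_upwards [ae_restrict_mem measurableSet_Ioo] with t ht
    exact (integrable_mul_kernel_left hGm hG hα hfm hf ht).mul_prod
      (integrable_mul_kernel_left hGm hG hα hgm hg ht)
  refine ((integrableOn_rpow_neg_mul_self hβ).const_mul
    (Cf * κ * (T ^ α / α) * (Cg * κ * (T ^ α / α)))).mono'
    hm.norm.aestronglyMeasurable.integral_prod_right' ?_
  filter_upwards [ae_restrict_mem measurableSet_Ioo] with t ht
  rw [Real.norm_of_nonneg (integral_nonneg fun _ => norm_nonneg _)]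
  calc ∫ p, ‖f p.1 * G p.1 t * (g p.2 * G p.2 t)‖ ∂((μT).prod μT)
      = (∫ r, ‖f r * G r t‖ ∂μT) * ∫ s, ‖g s * G s t‖ ∂μT := by
        simp_rw [norm_mul (f _ * G _ t)]
        exact integral_prod_mul (fun r => ‖f r * G r t‖) (fun s => ‖g s * G s t‖)
    _ ≤ Cf * κ * (T ^ α / α) * t ^ (-β) * (Cg * κ * (T ^ α / α) * t ^ (-β)) :=
        mul_le_mul (integral_norm_mul_kernel_left_le hG hα hκ hf ht)
          (integral_norm_mul_kernel_left_le hG hα hκ hg ht) (integral_nonneg fun _ => norm_nonneg _)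
          (mul_nonneg (mul_nonneg (mul_nonneg ((abs_nonneg _).trans (hf t ht)) hκ)
            (div_nonneg (rpow_nonneg (ht.1.trans ht.2).le _) hα.le)) (rpow_nonneg ht.1.le _))
    _ = Cf * κ * (T ^ α / α) * (Cg * κ * (T ^ α / α)) * (t ^ (-β) * t ^ (-β)) := by ring

theorem integrable_mul_integral_kernel_mul_kernel (hGm : Measurable (uncurry G))
    (hG : ∀ r u, |G r u| ≤ κ * volterraMajorant α β r u) (hα : 0 < α) (hβ : β < 1 / 2)
    (hκ : 0 ≤ κ) {g : ℝ → ℝ} (hgm : Measurable g) {C : ℝ} (hg : ∀ s ∈ Ioo 0 T, |g s| ≤ C)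
    {r : ℝ} (hr : r ∈ Ioo 0 T) :
    Integrable (fun s => g s * ∫ u, G r u * G s u ∂μT) μT := by
  have hm : Measurable fun z : ℝ × ℝ => G r z.1 * (g z.2 * G z.2 z.1) :=
    (hGm.of_uncurry_left.comp measurable_fst).mul
      ((hgm.comp measurable_snd).mul (hGm.comp (measurable_snd.prodMk measurable_fst)))
  have hint : Integrable (fun z : ℝ × ℝ => G r z.1 * (g z.2 * G z.2 z.1)) ((μT).prod μT) := by
    refine (integrable_prod_iff hm.aestronglyMeasurable).mpr ⟨?_, ?_⟩
    · filter_upwards [ae_restrict_mem measurableSet_Ioo] with u hu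
      exact (integrable_mul_kernel_left hGm hG hα hgm hg hu).const_mul _
    refine ((integrableOn_volterraMajorant_mul_rpow hα hβ hr).const_mul
      (κ * (C * κ * (T ^ α / α)))).mono'
      hm.norm.aestronglyMeasurable.integral_prod_right' ?_
    filter_upwards [ae_restrict_mem measurableSet_Ioo] with u hu
    rw [Real.norm_of_nonneg (integral_nonneg fun _ => norm_nonneg _)]
    calc ∫ s, ‖G r u * (g s * G s u)‖ ∂μT = |G r u| * ∫ s, ‖g s * G s u‖ ∂μT := by
          simp_rw [norm_mul (G r u)]
          exact MeasureTheory.integral_const_mul _ _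
      _ ≤ κ * volterraMajorant α β r u * (C * κ * (T ^ α / α) * u ^ (-β)) :=
          mul_le_mul (hG r u) (integral_norm_mul_kernel_left_le hG hα hκ hg hu)
            (integral_nonneg fun _ => norm_nonneg _) ((abs_nonneg _).trans (hG r u))
      _ = κ * (C * κ * (T ^ α / α)) * (volterraMajorant α β r u * u ^ (-β)) := by ring
  refine hint.integral_prod_right.congr (ae_of_all _ fun s => ?_)
  simp only
  rw [← MeasureTheory.integral_const_mul]
  congr 1 with u
  ring

end DominatedKernel

section Fubini

variable {X : Type*} [MeasurableSpace X] {μ : Measure X} {G : X → X → ℝ} {f g : X → ℝ}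

theorem integral_mul_kernel_mul_kernel (r s : X) :
    ∫ t, f r * G r t * (g s * G s t) ∂μ = (∫ t, G r t * G s t ∂μ) * f r * g s := by
  rw [← MeasureTheory.integral_mul_const, ← MeasureTheory.integral_mul_const]
  congr 1 with t
  ring

variable [SFinite μ]

theorem integrable_integral_mul_integral_kernel (hF : Integrable
      (fun p : X × X × X => f p.2.1 * G p.2.1 p.1 * (g p.2.2 * G p.2.2 p.1)) (μ.prod (μ.prod μ))) :
    Integrable (fun t => (∫ r, f r * G r t ∂μ) * ∫ s, g s * G s t ∂μ) μ :=
  hF.integral_prod_left.congr (ae_of_all _ fun t =>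
    integral_prod_mul (fun r => f r * G r t) (fun s => g s * G s t))

theorem integrable_integral_integral_kernel_mul_kernel (hF : Integrable
      (fun p : X × X × X => f p.2.1 * G p.2.1 p.1 * (g p.2.2 * G p.2.2 p.1)) (μ.prod (μ.prod μ))) :
    Integrable (fun r => ∫ s, (∫ t, G r t * G s t ∂μ) * f r * g s ∂μ) μ := by
  refine hF.swap.integral_prod_left.integral_prod_left.congr (ae_of_all _ fun r => ?_)
  exact integral_congr_ae (ae_of_all _ fun s => integral_mul_kernel_mul_kernel r s)

theorem integral_integral_mul_integral_kernel (hF : Integrable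
      (fun p : X × X × X => f p.2.1 * G p.2.1 p.1 * (g p.2.2 * G p.2.2 p.1)) (μ.prod (μ.prod μ))) :
    ∫ t, (∫ r, f r * G r t ∂μ) * (∫ s, g s * G s t ∂μ) ∂μ =
      ∫ r, ∫ s, (∫ t, G r t * G s t ∂μ) * f r * g s ∂μ ∂μ := by
  calc ∫ t, (∫ r, f r * G r t ∂μ) * (∫ s, g s * G s t ∂μ) ∂μ
      = ∫ t, ∫ p : X × X, f p.1 * G p.1 t * (g p.2 * G p.2 t) ∂(μ.prod μ) ∂μ := by
        exact integral_congr_ae (ae_of_all _ fun t =>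
          (integral_prod_mul (fun r => f r * G r t) (fun s => g s * G s t)).symm)
    _ = ∫ p : X × X, ∫ t, f p.1 * G p.1 t * (g p.2 * G p.2 t) ∂μ ∂(μ.prod μ) :=
        integral_integral_swap hF
    _ = ∫ r, ∫ s, ∫ t, f r * G r t * (g s * G s t) ∂μ ∂μ ∂μ :=
        integral_prod _ hF.swap.integral_prod_left
    _ = ∫ r, ∫ s, (∫ t, G r t * G s t ∂μ) * f r * g s ∂μ ∂μ := by
        simp_rw [integral_mul_kernel_mul_kernel]

end Fubini

noncomputable def truncKernel (T : ℝ) (K' : ℝ → ℝ → ℝ) (r u : ℝ) : ℝ :=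
  if 0 < u ∧ u < r ∧ r < T then K' r u else 0

section truncKernel

variable {T : ℝ} {K' : ℝ → ℝ → ℝ}

theorem measurable_uncurry_truncKernel
    (hK' : ContinuousOn (fun p : ℝ × ℝ => K' p.1 p.2) {p | 0 < p.2 ∧ p.2 < p.1 ∧ p.1 < T}) :
    Measurable (uncurry (truncKernel T K')) := by
  have hopen : IsOpen {p : ℝ × ℝ | 0 < p.2 ∧ p.2 < p.1 ∧ p.1 < T} :=
    (isOpen_lt continuous_const continuous_snd).inter
      ((isOpen_lt continuous_snd continuous_fst).inter (isOpen_lt continuous_fst continuous_const))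
  classical
  convert hK'.measurable_piecewise (g := fun _ => 0) continuousOn_const hopen.measurableSet
    using 1
  ext p
  simp only [uncurry, truncKernel, piecewise, mem_ofPred_eq]

theorem abs_truncKernel_le {α β c : ℝ} (hT : 0 < T) (hβ : 0 ≤ β) (hc : 0 ≤ c)
    (hH2 : ∀ s t : ℝ, 0 < s → s < t → t < T → |K' t s| ≤ c * (t - s) ^ (α - 1) * (t / s) ^ β)
    (r u : ℝ) : |truncKernel T K' r u| ≤ c * T ^ β * volterraMajorant α β r u := by
  unfold truncKernel
  split_ifs with h
  · obtain ⟨hu, hur, hrT⟩ := h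
    rw [volterraMajorant_of_mem hu hur]
    calc |K' r u| ≤ c * (r - u) ^ (α - 1) * (r / u) ^ β := hH2 u r hu hur hrT
      _ ≤ c * (r - u) ^ (α - 1) * (T / u) ^ β := by
        have : 0 ≤ r / u := div_nonneg (hu.trans hur).le hu.le
        have : r ≤ T := hrT.le
        gcongr
      _ = c * T ^ β * ((r - u) ^ (α - 1) * u ^ (-β)) := by
        rw [div_rpow hT.le hu.le, rpow_neg hu.le, div_eq_mul_inv]; ring
  · rw [abs_zero]
    exact mul_nonneg (mul_nonneg hc (rpow_nonneg hT.le _)) volterraMajorant_nonneg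

theorem truncKernel_of_mem {r u : ℝ} (hu : 0 < u) (hur : u < r) (hr : r < T) :
    truncKernel T K' r u = K' r u :=
  if_pos ⟨hu, hur, hr⟩

theorem truncKernel_of_le {r u : ℝ} (h : r ≤ u) : truncKernel T K' r u = 0 :=
  if_neg fun h' => h'.2.1.not_ge h

theorem eqOn_mul_truncKernel (f : ℝ → ℝ) {t : ℝ} (ht : 0 < t) :
    EqOn (fun r => f r * truncKernel T K' r t) (fun r => f r * K' r t) (Ioo t T) :=
  fun r hr => by simp only [truncKernel_of_mem ht hr.1 hr.2]

theorem integrableOn_truncKernel_iff_intervalIntegrable (f : ℝ → ℝ) {t : ℝ}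
    (ht : t ∈ Ioo 0 T) :
    IntegrableOn (fun r => f r * truncKernel T K' r t) (Ioo 0 T) ↔
      IntervalIntegrable (fun r => f r * K' r t) volume t T :=
  integrableOn_iff_intervalIntegrable_of_eqOn_Ioo measurableSet_Ioo ht.2.le
    (Ioo_subset_Ioo_left ht.1.le) (eqOn_mul_truncKernel f ht.1)
    (fun _ hr => by rw [truncKernel_of_le (not_lt.mp fun h => hr.2 ⟨h, hr.1.2⟩), mul_zero])

theorem setIntegral_truncKernel_eq_intervalIntegral (f : ℝ → ℝ) {t : ℝ} (ht : t ∈ Ioo 0 T) :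
    ∫ r in Ioo 0 T, f r * truncKernel T K' r t = ∫ r in t..T, f r * K' r t :=
  setIntegral_eq_intervalIntegral_of_eqOn_Ioo measurableSet_Ioo ht.2.le
    (Ioo_subset_Ioo_left ht.1.le) (eqOn_mul_truncKernel f ht.1)
    (fun _ hr => by rw [truncKernel_of_le (not_lt.mp fun h => hr.2 ⟨h, hr.1.2⟩), mul_zero])

theorem eqOn_truncKernel_mul_truncKernel {r s : ℝ} (hr : r < T) (hs : s < T) :
    EqOn (fun u => truncKernel T K' r u * truncKernel T K' s u) (fun u => K' r u * K' s u)
      (Ioo 0 (min r s)) := fun u hu => by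
  dsimp only
  rw [truncKernel_of_mem hu.1 (hu.2.trans_le (min_le_left r s)) hr,
    truncKernel_of_mem hu.1 (hu.2.trans_le (min_le_right r s)) hs]

theorem truncKernel_mul_truncKernel_of_min_le {r s u : ℝ} (h : min r s ≤ u) :
    truncKernel T K' r u * truncKernel T K' s u = 0 := by
  rcases min_le_iff.mp h with h | h
  · rw [truncKernel_of_le h, zero_mul]
  · rw [truncKernel_of_le h, mul_zero]

theorem integrableOn_truncKernel_mul_iff_intervalIntegrable {r s : ℝ} (hr : r ∈ Ioo 0 T)
    (hs : s ∈ Ioo 0 T) :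
    IntegrableOn (fun u => truncKernel T K' r u * truncKernel T K' s u) (Ioo 0 T) ↔
      IntervalIntegrable (fun u => K' r u * K' s u) volume 0 (min r s) :=
  integrableOn_iff_intervalIntegrable_of_eqOn_Ioo measurableSet_Ioo (le_min hr.1.le hs.1.le)
    (Ioo_subset_Ioo_right ((min_le_left r s).trans hr.2.le))
    (eqOn_truncKernel_mul_truncKernel hr.2 hs.2)
    (fun _ hu => truncKernel_mul_truncKernel_of_min_le (not_lt.mp fun h => hu.2 ⟨hu.1.1, h⟩))

theorem setIntegral_truncKernel_mul_eq_intervalIntegral {r s : ℝ} (hr : r ∈ Ioo 0 T)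
    (hs : s ∈ Ioo 0 T) :
    ∫ u in Ioo 0 T, truncKernel T K' r u * truncKernel T K' s u =
      ∫ u in 0..min r s, K' r u * K' s u :=
  setIntegral_eq_intervalIntegral_of_eqOn_Ioo measurableSet_Ioo (le_min hr.1.le hs.1.le)
    (Ioo_subset_Ioo_right ((min_le_left r s).trans hr.2.le))
    (eqOn_truncKernel_mul_truncKernel hr.2 hs.2)
    (fun _ hu => truncKernel_mul_truncKernel_of_min_le (not_lt.mp fun h => hu.2 ⟨hu.1.1, h⟩))

end truncKernel

theorem volterra_inner_product_fubini_general
    (T : ℝ) (hT : 0 < T) (K' : ℝ → ℝ → ℝ)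
    (hK'cont : ContinuousOn (fun p : ℝ × ℝ => K' p.1 p.2)
      {p : ℝ × ℝ | 0 < p.2 ∧ p.2 < p.1 ∧ p.1 < T})
    (α β c : ℝ) (hα : 0 < α) (hα' : α < 1 / 2) (hβ : 0 < β) (hβ' : β < 1 / 2)
    (hc : 0 < c)
    (hH2 : ∀ s t : ℝ, 0 < s → s < t → t < T →
      |K' t s| ≤ c * (t - s) ^ (α - 1) * (t / s) ^ β)
    (a b : ℝ → ℝ) (ha : Measurable a) (hb : Measurable b)
    (Ca Cb : ℝ) (haB : ∀ t ∈ Set.Icc (0 : ℝ) T, |a t| ≤ Ca)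
    (hbB : ∀ t ∈ Set.Icc (0 : ℝ) T, |b t| ≤ Cb) :
    (∀ t ∈ Set.Ioo (0 : ℝ) T,
        IntervalIntegrable (fun r => a r * K' r t) MeasureTheory.volume t T ∧
        IntervalIntegrable (fun s => b s * K' s t) MeasureTheory.volume t T) ∧
    IntervalIntegrable
      (fun t => (∫ r in t..T, a r * K' r t) * (∫ s in t..T, b s * K' s t))
      MeasureTheory.volume 0 T ∧
    (∀ r ∈ Set.Ioo (0 : ℝ) T, ∀ s ∈ Set.Ioo (0 : ℝ) T, r ≠ s →
        IntervalIntegrable (fun u => K' r u * K' s u) MeasureTheory.volume 0 (min r s)) ∧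
    (∀ r ∈ Set.Ioo (0 : ℝ) T,
        IntervalIntegrable
          (fun s => (∫ u in (0 : ℝ)..(min r s), K' r u * K' s u) * a r * b s)
          MeasureTheory.volume 0 T) ∧
    IntervalIntegrable
      (fun r => ∫ s in (0 : ℝ)..T, (∫ u in (0 : ℝ)..(min r s), K' r u * K' s u) * a r * b s)
      MeasureTheory.volume 0 T ∧
    (∫ t in (0 : ℝ)..T, (∫ r in t..T, a r * K' r t) * (∫ s in t..T, b s * K' s t))
      = ∫ r in (0 : ℝ)..T, ∫ s in (0 : ℝ)..T,
          (∫ u in (0 : ℝ)..(min r s), K' r u * K' s u) * a r * b s := by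
  set G := truncKernel T K'
  have hGm : Measurable (uncurry G) := measurable_uncurry_truncKernel hK'cont
  have hG := abs_truncKernel_le hT hβ.le hc.le hH2
  have hκ : 0 ≤ c * T ^ β := by positivity
  have ha' : ∀ r ∈ Ioo 0 T, |a r| ≤ Ca := fun r hr => haB r (Ioo_subset_Icc_self hr)
  have hb' : ∀ s ∈ Ioo 0 T, |b s| ≤ Cb := fun s hs => hbB s (Ioo_subset_Icc_self hs)
  have hF := integrable_mul_kernel_mul_mul_kernel hGm hG hα hβ' hκ ha hb ha' hb'
  have hLHS : EqOn (fun t => (∫ r in Ioo 0 T, a r * G r t) * ∫ s in Ioo 0 T, b s * G s t)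
      (fun t => (∫ r in t..T, a r * K' r t) * ∫ s in t..T, b s * K' s t) (Ioo 0 T) :=
    fun t ht => by
      simp only [setIntegral_truncKernel_eq_intervalIntegral _ ht, G]
  have hφ : ∀ r ∈ Ioo 0 T, EqOn (fun s => (∫ u in Ioo 0 T, G r u * G s u) * a r * b s)
      (fun s => (∫ u in (0 : ℝ)..(min r s), K' r u * K' s u) * a r * b s) (Ioo 0 T) :=
    fun r hr s hs => by
      simp only [setIntegral_truncKernel_mul_eq_intervalIntegral hr hs, G]
  have hRHS : EqOn (fun r => ∫ s in Ioo 0 T, (∫ u in Ioo 0 T, G r u * G s u) * a r * b s)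
      (fun r => ∫ s in (0 : ℝ)..T, (∫ u in (0 : ℝ)..(min r s), K' r u * K' s u) * a r * b s)
      (Ioo 0 T) :=
    fun r hr => by
      simp only [integral_of_le hT.le, integral_Ioc_eq_integral_Ioo,
        setIntegral_congr_fun measurableSet_Ioo (hφ r hr)]
  refine ⟨fun t ht => ⟨?_, ?_⟩, ?_, fun r hr s hs hrs => ?_, fun r hr => ?_, ?_, ?_⟩
  · exact (integrableOn_truncKernel_iff_intervalIntegrable a ht).mp
      (integrable_mul_kernel_left hGm hG hα ha ha' ht)
  · exact (integrableOn_truncKernel_iff_intervalIntegrable b ht).mp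
      (integrable_mul_kernel_left hGm hG hα hb hb' ht)
  · exact (intervalIntegrable_iff_integrableOn_Ioo_of_le hT.le).mpr
      (IntegrableOn.congr_fun (integrable_integral_mul_integral_kernel hF) hLHS measurableSet_Ioo)
  · exact (integrableOn_truncKernel_mul_iff_intervalIntegrable hr hs).mp
      (integrable_kernel_mul_kernel hGm hG hα (by linarith) hβ' hr hs hrs)
  · refine (intervalIntegrable_iff_integrableOn_Ioo_of_le hT.le).mpr
      (IntegrableOn.congr_fun ?_ (hφ r hr) measurableSet_Ioo)
    refine ((integrable_mul_integral_kernel_mul_kernel hGm hG hα hβ' hκ hb hb' hr).const_mul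
      (a r)).congr (ae_of_all _ fun s => by ring)
  · exact (intervalIntegrable_iff_integrableOn_Ioo_of_le hT.le).mpr
      (IntegrableOn.congr_fun (integrable_integral_integral_kernel_mul_kernel hF) hRHS
        measurableSet_Ioo)
  · rw [integral_of_le hT.le, integral_of_le hT.le, integral_Ioc_eq_integral_Ioo,
      integral_Ioc_eq_integral_Ioo, ← setIntegral_congr_fun measurableSet_Ioo hLHS,
      ← setIntegral_congr_fun measurableSet_Ioo hRHS]
    exact integral_integral_mul_integral_kernel hF

/-- For a Volterra kernel `K` satisfying (H1)-(H2) with derivative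
`K' = ∂K/∂t`, and bounded measurable `a, b : [0,T] → ℝ`, all the integrals converge
absolutely and
`∫_0^T (∫_t^T a_r K'(r,t) dr)(∫_t^T b_s K'(s,t) ds) dt = ∫_0^T ∫_0^T φ(r,s) a_r b_s ds dr`,
where `φ(r,s) = ∫_0^{min(r,s)} K'(r,u) K'(s,u) du`. -/
theorem volterra_inner_product_fubini
    (T : ℝ) (hT : 0 < T) (K K' : ℝ → ℝ → ℝ)
    (hVol : ∀ t s : ℝ, t < s → K t s = 0)
    (hKcont : ContinuousOn (fun p : ℝ × ℝ => K p.1 p.2)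
      {p : ℝ × ℝ | 0 < p.2 ∧ p.2 ≤ p.1 ∧ p.1 < T})
    (hK' : ∀ s t : ℝ, 0 < s → s < t → t < T → HasDerivAt (fun τ => K τ s) (K' t s) t)
    (hK'cont : ContinuousOn (fun p : ℝ × ℝ => K' p.1 p.2)
      {p : ℝ × ℝ | 0 < p.2 ∧ p.2 < p.1 ∧ p.1 < T})
    (α β c : ℝ) (hα : 0 < α) (hα' : α < 1 / 2) (hβ : 0 < β) (hβ' : β < 1 / 2)
    (hc : 0 < c)
    (hH2 : ∀ s t : ℝ, 0 < s → s < t → t < T →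
      |K' t s| ≤ c * (t - s) ^ (α - 1) * (t / s) ^ β)
    (a b : ℝ → ℝ) (ha : Measurable a) (hb : Measurable b)
    (Ca Cb : ℝ) (haB : ∀ t ∈ Set.Icc (0 : ℝ) T, |a t| ≤ Ca)
    (hbB : ∀ t ∈ Set.Icc (0 : ℝ) T, |b t| ≤ Cb) :
    (∀ t ∈ Set.Ioo (0 : ℝ) T,
        IntervalIntegrable (fun r => a r * K' r t) MeasureTheory.volume t T ∧
        IntervalIntegrable (fun s => b s * K' s t) MeasureTheory.volume t T) ∧
    IntervalIntegrable
      (fun t => (∫ r in t..T, a r * K' r t) * (∫ s in t..T, b s * K' s t))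
      MeasureTheory.volume 0 T ∧
    (∀ r ∈ Set.Ioo (0 : ℝ) T, ∀ s ∈ Set.Ioo (0 : ℝ) T, r ≠ s →
        IntervalIntegrable (fun u => K' r u * K' s u) MeasureTheory.volume 0 (min r s)) ∧
    (∀ r ∈ Set.Ioo (0 : ℝ) T,
        IntervalIntegrable
          (fun s => (∫ u in (0 : ℝ)..(min r s), K' r u * K' s u) * a r * b s)
          MeasureTheory.volume 0 T) ∧
    IntervalIntegrable
      (fun r => ∫ s in (0 : ℝ)..T, (∫ u in (0 : ℝ)..(min r s), K' r u * K' s u) * a r * b s)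
      MeasureTheory.volume 0 T ∧
    (∫ t in (0 : ℝ)..T, (∫ r in t..T, a r * K' r t) * (∫ s in t..T, b s * K' s t))
      = ∫ r in (0 : ℝ)..T, ∫ s in (0 : ℝ)..T,
          (∫ u in (0 : ℝ)..(min r s), K' r u * K' s u) * a r * b s :=
  volterra_inner_product_fubini_general T hT K' hK'cont α β c hα hα' hβ hβ' hc hH2 a b ha hb Ca Cb
    haB hbB
end

section
/- For every x ∈ ℝⁿ, u(t,x) converges to g(x) as t → T from the left; that is, u satisfies the terminal condition u(T,x) = g(x) when extended by continuity. -/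
/-! Both scalar terms are integrals over `[t, T]` of bounded functions, so they tend to `0` and
`1`. In the Gaussian term substitute `y = m(t) + √σ(t) z`, with `m_j(t) = x_j - ∫_t^T r_j` and
`σ_j(t) = R_j(T) - R_j(t)`: it becomes `∫ g(m(t) + √σ(t) z) φ(z) dz` for the standard Gaussian
density `φ`. As `t → T⁻` we have `m(t) → x` and `σ(t) → 0`; once `8 λ' σ_j(t) ≤ 1` the Gaussian
growth of `g` is dominated by `C exp(-|z|²/4)`, and dominated convergence gives the limit
`g(x) ∫ φ = g(x)`. -/

open Real MeasureTheory intervalIntegral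
open Filter Topology Set
open scoped NNReal ENNReal

theorem measurePreserving_add_mul_left (c : ℝ) {s : ℝ} (hs : s ≠ 0) :
    MeasurePreserving (fun z => c + s * z) (‖s‖₊ • volume) volume := by
  refine ⟨(measurable_const_mul s).const_add c, ?_⟩
  have hinv : (‖s‖₊ : ℝ≥0∞) * ENNReal.ofReal |s⁻¹| = 1 := by
    rw [← ENNReal.ofReal_coe_nnreal, coe_nnnorm, ← ENNReal.ofReal_mul (norm_nonneg _),
      Real.norm_eq_abs, ← abs_mul, mul_inv_cancel₀ hs, abs_one, ENNReal.ofReal_one]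
  calc Measure.map (fun z => c + s * z) (‖s‖₊ • volume)
      = ‖s‖₊ • Measure.map (c + ·) (Measure.map (s * ·) volume) := by
        rw [Measure.map_smul, Measure.map_map (measurable_const_add c) (measurable_const_mul s)]
        rfl
    _ = volume := by
        rw [Real.map_volume_mul_left hs, Measure.map_smul,
          (measurePreserving_add_left volume c).map_eq, ENNReal.smul_def, smul_smul, hinv, one_smul]

theorem MeasureTheory.Measure.pi_smul_nnreal {ι : Type*} [Fintype ι] {X : ι → Type*}
    [∀ i, MeasurableSpace (X i)] (μ : ∀ i, Measure (X i)) [∀ i, SigmaFinite (μ i)] (a : ι → ℝ≥0) :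
    Measure.pi (fun i => a i • μ i) = (∏ i, a i) • Measure.pi μ := by
  refine Measure.pi_eq fun s hs => ?_
  simp only [Measure.smul_apply, Measure.pi_pi, ENNReal.smul_def, smul_eq_mul,
    ENNReal.ofNNReal_finsetProd, Finset.prod_mul_distrib]

theorem integral_comp_add_mul_pi {ι E : Type*} [Fintype ι] [NormedAddCommGroup E]
    [NormedSpace ℝ E] (c s : ι → ℝ) (hs : ∀ j, s j ≠ 0) (G : (ι → ℝ) → E) :
    (∏ j, |s j|) • ∫ z : ι → ℝ, G (fun j => c j + s j * z j) = ∫ y, G y := by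
  let e : (ι → ℝ) ≃ₜ (ι → ℝ) := Homeomorph.piCongrRight fun j =>
    (Homeomorph.mulLeft₀ (s j) (hs j)).trans (Homeomorph.addLeft (c j))
  have hmp : MeasurePreserving e (Measure.pi fun j => ‖s j‖₊ • volume) volume :=
    measurePreserving_pi _ _ fun j => measurePreserving_add_mul_left (c j) (hs j)
  calc (∏ j, |s j|) • ∫ z : ι → ℝ, G (fun j => c j + s j * z j)
      = ∫ z, G (e z) ∂(Measure.pi fun j => ‖s j‖₊ • volume) := by
        rw [Measure.pi_smul_nnreal, integral_smul_nnreal_measure, ← volume_pi, NNReal.smul_def,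
          NNReal.coe_prod]
        simp only [coe_nnnorm, Real.norm_eq_abs]
        rfl
    _ = ∫ y, G y := hmp.integral_comp e.measurableEmbedding G

/-- The kernel `v(σ, z)` of the paper: the centred Gaussian density of variance `σ`. -/
noncomputable def heatKernel (σ z : ℝ) : ℝ :=
  (2 * π * σ) ^ (-(1 : ℝ) / 2) * exp (-z ^ 2 / (2 * σ))

theorem heatKernel_one (z : ℝ) :
    heatKernel 1 z = (2 * π) ^ (-(1 : ℝ) / 2) * exp (-z ^ 2 / 2) := by
  simp only [heatKernel, mul_one]

theorem heatKernel_nonneg {σ : ℝ} (hσ : 0 ≤ σ) (z : ℝ) : 0 ≤ heatKernel σ z := by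
  unfold heatKernel; positivity

@[simp]
theorem heatKernel_neg (σ z : ℝ) : heatKernel σ (-z) = heatKernel σ z := by
  simp only [heatKernel, neg_sq]

@[fun_prop]
theorem continuous_heatKernel (σ : ℝ) : Continuous (heatKernel σ) := by
  unfold heatKernel; fun_prop

theorem sqrt_mul_heatKernel_sqrt_mul {σ : ℝ} (hσ : 0 < σ) (z : ℝ) :
    √σ * heatKernel σ (√σ * z) = heatKernel 1 z := by
  have h2π : (0 : ℝ) < 2 * π := by positivity
  have hexp : -(√σ * z) ^ 2 / (2 * σ) = -z ^ 2 / (2 * 1) := by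
    rw [mul_pow, sq_sqrt hσ.le]; field_simp
  rw [heatKernel, heatKernel, hexp, mul_rpow h2π.le hσ.le, mul_one, neg_div,
    rpow_neg hσ.le, ← sqrt_eq_rpow]
  field_simp

theorem integral_heatKernel_one : ∫ z, heatKernel 1 z = 1 := by
  have hgauss := integral_gaussian (1 / 2)
  have hexp : ∀ z : ℝ, -z ^ 2 / 2 = -(1 / 2) * z ^ 2 := fun z => by ring
  simp only [heatKernel_one, MeasureTheory.integral_const_mul, hexp, hgauss]
  rw [div_div_eq_mul_div, div_one, mul_comm π, sqrt_eq_rpow, ← rpow_add (by positivity)]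
  norm_num

theorem integral_mul_prod_heatKernel {ι : Type*} [Fintype ι] (F : (ι → ℝ) → ℝ) {σ : ι → ℝ}
    (hσ : ∀ j, 0 < σ j) (m : ι → ℝ) :
    ∫ y, F y * ∏ j, heatKernel (σ j) (m j - y j)
      = ∫ z : ι → ℝ, F (fun j => m j + √(σ j) * z j) * ∏ j, heatKernel 1 (z j) := by
  rw [← integral_comp_add_mul_pi m (fun j => √(σ j)) (fun j => (sqrt_pos.2 (hσ j)).ne'),
    ← MeasureTheory.integral_smul]
  congr 1 with z
  simp only [sub_add_cancel_left, heatKernel_neg, smul_eq_mul, abs_of_nonneg (sqrt_nonneg _)]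
  rw [mul_left_comm, ← Finset.prod_mul_distrib]
  simp only [sqrt_mul_heatKernel_sqrt_mul (hσ _)]

theorem integral_prod_heatKernel_one (ι : Type*) [Fintype ι] :
    ∫ z : ι → ℝ, ∏ j, heatKernel 1 (z j) = 1 := by
  rw [integral_fintype_prod_volume_eq_prod (fun _ => heatKernel 1)]
  simp only [integral_heatKernel_one, Finset.prod_const_one]

theorem exp_mul_sq_mul_heatKernel_one_le {lam m σ M : ℝ} (hlam : 0 ≤ lam) (hm : |m| ≤ M)
    (hσ : 0 ≤ σ) (hσlam : 8 * lam * σ ≤ 1) (z : ℝ) :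
    exp (lam * (m + √σ * z) ^ 2) * heatKernel 1 z
      ≤ exp (2 * lam * M ^ 2) * ((2 * π) ^ (-(1 : ℝ) / 2) * exp (-(1 / 4) * z ^ 2)) := by
  rw [heatKernel_one, mul_left_comm, mul_left_comm (exp _), ← exp_add, ← exp_add]
  refine mul_le_mul_of_nonneg_left (exp_le_exp.2 ?_) (by positivity)
  have hsq : (m + √σ * z) ^ 2 ≤ 2 * m ^ 2 + 2 * σ * z ^ 2 := by
    nlinarith [sq_nonneg (m - √σ * z), sq_sqrt hσ]
  have hmM : m ^ 2 ≤ M ^ 2 := sq_le_sq' (abs_le.1 hm).1 (abs_le.1 hm).2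
  nlinarith [mul_le_mul_of_nonneg_left hsq hlam, mul_le_mul_of_nonneg_left hmM hlam,
    mul_le_mul_of_nonneg_right hσlam (sq_nonneg z)]

theorem norm_comp_add_sqrt_mul_mul_prod_heatKernel_one_le {ι : Type*} [Fintype ι]
    {g : (ι → ℝ) → ℝ} {c lam : ℝ} (hc : 0 ≤ c) (hlam : 0 ≤ lam)
    (hgrowth : ∀ y, |g y| ≤ c * exp (lam * ∑ j, y j ^ 2)) {m σ M : ι → ℝ} (hm : ∀ j, |m j| ≤ M j)
    (hσ : ∀ j, 0 ≤ σ j) (hσlam : ∀ j, 8 * lam * σ j ≤ 1) (z : ι → ℝ) :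
    ‖g (fun j => m j + √(σ j) * z j) * ∏ j, heatKernel 1 (z j)‖
      ≤ c * ∏ j, exp (2 * lam * M j ^ 2) *
          ((2 * π) ^ (-(1 : ℝ) / 2) * exp (-(1 / 4) * z j ^ 2)) := by
  have hK : 0 ≤ ∏ j, heatKernel 1 (z j) :=
    Finset.prod_nonneg fun j _ => heatKernel_nonneg zero_le_one _
  calc ‖g (fun j => m j + √(σ j) * z j) * ∏ j, heatKernel 1 (z j)‖
      = |g (fun j => m j + √(σ j) * z j)| * ∏ j, heatKernel 1 (z j) := by
        rw [norm_mul, norm_of_nonneg hK, Real.norm_eq_abs]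
    _ ≤ c * exp (lam * ∑ j, (m j + √(σ j) * z j) ^ 2) * ∏ j, heatKernel 1 (z j) := by
        gcongr; exact hgrowth _
    _ = c * ∏ j, exp (lam * (m j + √(σ j) * z j) ^ 2) * heatKernel 1 (z j) := by
        rw [Finset.mul_sum, exp_sum, mul_assoc, ← Finset.prod_mul_distrib]
    _ ≤ _ := mul_le_mul_of_nonneg_left (Finset.prod_le_prod
        (fun j _ => mul_nonneg (exp_pos _).le (heatKernel_nonneg zero_le_one _))
        (fun j _ => exp_mul_sq_mul_heatKernel_one_le hlam (hm j) (hσ j) (hσlam j) (z j))) hc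

theorem tendsto_integral_mul_prod_heatKernel {ι α : Type*} [Fintype ι] {l : Filter α}
    [l.IsCountablyGenerated] {g : (ι → ℝ) → ℝ} (hg : Continuous g) {c lam : ℝ}
    (hgrowth : ∀ y, |g y| ≤ c * exp (lam * ∑ j, y j ^ 2)) {m σ : α → ι → ℝ} {x : ι → ℝ}
    (hm : Tendsto m l (𝓝 x)) (hσ : Tendsto σ l (𝓝 0)) (hσpos : ∀ᶠ a in l, ∀ j, 0 < σ a j) :
    Tendsto (fun a => ∫ y, g y * ∏ j, heatKernel (σ a j) (m a j - y j)) l (𝓝 (g x)) := by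
  have hc : 0 ≤ c :=
    (mul_nonneg_iff_of_pos_right (exp_pos _)).1 ((abs_nonneg _).trans (hgrowth 0))
  wlog hlam : 0 ≤ lam generalizing lam
  · refine this (lam := 0) (fun y => (hgrowth y).trans ?_) le_rfl
    gcongr
    exact (not_le.1 hlam).le
  have hmM : ∀ᶠ a in l, ∀ j, |m a j| ≤ |x j| + 1 := eventually_all.2 fun j =>
    ((continuous_abs.tendsto _).comp (tendsto_pi_nhds.1 hm j)).eventually_le_const (lt_add_one _)
  have hσlam : ∀ᶠ a in l, ∀ j, 8 * lam * σ a j ≤ 1 := eventually_all.2 fun j => by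
    have := (tendsto_pi_nhds.1 hσ j).const_mul (8 * lam)
    rw [Pi.zero_apply, mul_zero] at this
    exact this.eventually_le_const one_pos
  have hsubst : ∀ᶠ a in l,
      ∫ z : ι → ℝ, g (fun j => m a j + √(σ a j) * z j) * ∏ j, heatKernel 1 (z j)
        = ∫ y, g y * ∏ j, heatKernel (σ a j) (m a j - y j) :=
    hσpos.mono fun a ha => (integral_mul_prod_heatKernel g ha (m a)).symm
  have hlim : ∫ z : ι → ℝ, g x * ∏ j, heatKernel 1 (z j) = g x := by
    rw [MeasureTheory.integral_const_mul, integral_prod_heatKernel_one, mul_one]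
  rw [← hlim]
  refine Tendsto.congr' hsubst (tendsto_integral_filter_of_dominated_convergence
    (fun z => c * ∏ j, exp (2 * lam * (|x j| + 1) ^ 2) *
      ((2 * π) ^ (-(1 : ℝ) / 2) * exp (-(1 / 4) * z j ^ 2))) ?_ ?_ ?_ ?_)
  · exact Eventually.of_forall fun a => (by fun_prop : Continuous _).aestronglyMeasurable
  · filter_upwards [hσpos, hmM, hσlam] with a hpos hM hsmall
    exact Eventually.of_forall <| norm_comp_add_sqrt_mul_mul_prod_heatKernel_one_le
      hc hlam hgrowth hM (fun j => (hpos j).le) hsmall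
  · exact (Integrable.fintype_prod fun j =>
      ((integrable_exp_neg_mul_sq (by norm_num)).const_mul _).const_mul _).const_mul c
  · refine Eventually.of_forall fun z => ((hg.tendsto x).comp ?_).mul_const _
    refine tendsto_pi_nhds.2 fun j => ?_
    simpa using (tendsto_pi_nhds.1 hm j).add
      (((continuous_sqrt.tendsto 0).comp (tendsto_pi_nhds.1 hσ j)).mul_const (z j))

section IntervalIntegral

variable {E : Type*} [NormedAddCommGroup E] [NormedSpace ℝ E] {a b C : ℝ}

theorem norm_intervalIntegral_le_of_forall_mem_Icc {h : ℝ → E} (hC : ∀ s ∈ Icc a b, ‖h s‖ ≤ C)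
    {t t' : ℝ} (ht : t ∈ Icc a b) (ht' : t' ∈ Icc a b) : ‖∫ s in t..t', h s‖ ≤ C * |t' - t| :=
  norm_integral_le_of_norm_le_const fun s hs => hC s (uIcc_subset_Icc ht ht' (uIoc_subset_uIcc hs))

theorem tendsto_intervalIntegral_nhdsLT_zero_of_norm_le {h : ℝ → ℝ → E} (hab : a < b)
    (hC : ∀ t ∈ Icc a b, ∀ s ∈ Icc a b, ‖h t s‖ ≤ C) :
    Tendsto (fun t => ∫ s in t..b, h t s) (𝓝[<] b) (𝓝 0) := by
  have hlim : Tendsto (fun t => C * |b - t|) (𝓝[<] b) (𝓝 0) := by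
    have h : Tendsto (fun t => C * |b - t|) (𝓝 b) (𝓝 (C * |b - b|)) :=
      (by fun_prop : Continuous fun t => C * |b - t|).tendsto b
    rw [sub_self, abs_zero, mul_zero] at h
    exact h.mono_left nhdsWithin_le_nhds
  refine squeeze_zero_norm' ?_ hlim
  filter_upwards [Icc_mem_nhdsLT hab] with t ht
  exact norm_intervalIntegral_le_of_forall_mem_Icc (hC t ht) ht ⟨hab.le, le_rfl⟩

theorem tendsto_intervalIntegral_exp_mul_nhdsLT_zero {A f : ℝ → ℝ} {CA Cf : ℝ}
    (hab : a < b) (hA : ∀ t ∈ Icc a b, |A t| ≤ CA) (hf : ∀ t ∈ Icc a b, |f t| ≤ Cf) :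
    Tendsto (fun t => ∫ s in t..b, exp (∫ ρ in s..t, A ρ) * f s) (𝓝[<] b) (𝓝 0) := by
  refine tendsto_intervalIntegral_nhdsLT_zero_of_norm_le hab (C := exp (CA * (b - a)) * Cf)
    fun t ht s hs => ?_
  have hCA : 0 ≤ CA := (abs_nonneg _).trans (hA b ⟨hab.le, le_rfl⟩)
  have hts : |t - s| ≤ b - a :=
    abs_sub_le_iff.2 ⟨by linarith [ht.2, hs.1], by linarith [hs.2, ht.1]⟩
  have hAint : ∫ ρ in s..t, A ρ ≤ CA * (b - a) :=
    (le_abs_self _).trans ((norm_intervalIntegral_le_of_forall_mem_Icc (h := A) hA hs ht).trans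
      (mul_le_mul_of_nonneg_left hts hCA))
  rw [norm_mul, norm_of_nonneg (exp_pos _).le]
  exact mul_le_mul (exp_le_exp.2 hAint) (hf s hs) (norm_nonneg _) (exp_pos _).le

end IntervalIntegral

theorem feynman_kac_terminal_condition_general
    (n : ℕ) (t₀ T : ℝ) (hT : t₀ < T)
    (R : Fin n → ℝ → ℝ)
    (hRsmooth : ∀ j, ContDiffOn ℝ 1 (R j) (Set.Icc t₀ T))
    (hRmono : ∀ j, StrictMonoOn (R j) (Set.Icc t₀ T))
    (r : Fin n → ℝ → ℝ) (A₁ f : ℝ → ℝ)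
    (Cr CA Cf : ℝ) (hrB : ∀ j, ∀ t ∈ Set.Icc t₀ T, |r j t| ≤ Cr)
    (hA₁B : ∀ t ∈ Set.Icc t₀ T, |A₁ t| ≤ CA) (hfB : ∀ t ∈ Set.Icc t₀ T, |f t| ≤ Cf)
    (g : (Fin n → ℝ) → ℝ) (hg : Continuous g)
    (c' lam' : ℝ)
    (hgrowth : ∀ x : Fin n → ℝ, |g x| ≤ c' * Real.exp (lam' * ∑ j, (x j) ^ 2))
    (u : ℝ → (Fin n → ℝ) → ℝ)
    (hu : ∀ t : ℝ, t₀ ≤ t → t < T → ∀ x : Fin n → ℝ,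
      u t x = -(∫ s in t..T, Real.exp (∫ ρ in s..t, A₁ ρ) * f s)
        + Real.exp (-(∫ s in t..T, A₁ s)) *
          ∫ y : Fin n → ℝ, g y *
            ∏ j, (2 * Real.pi * (R j T - R j t)) ^ (-(1 : ℝ) / 2) *
              Real.exp (-(x j - (∫ s in t..T, r j s) - y j) ^ 2
                / (2 * (R j T - R j t)))) :
    ∀ x : Fin n → ℝ,
      Filter.Tendsto (fun t => u t x) (nhdsWithin T (Set.Iio T)) (nhds (g x)) := by
  intro x
  have hTmem : T ∈ Icc t₀ T := ⟨hT.le, le_rfl⟩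
  have hsource := tendsto_intervalIntegral_exp_mul_nhdsLT_zero hT hA₁B hfB
  have hdiscount : Tendsto (fun t => exp (-∫ s in t..T, A₁ s)) (𝓝[<] T) (𝓝 1) := by
    simpa using (tendsto_intervalIntegral_nhdsLT_zero_of_norm_le hT (h := fun _ => A₁)
      fun _ _ => hA₁B).neg.rexp
  have hmean : Tendsto (fun t j => x j - ∫ s in t..T, r j s) (𝓝[<] T) (𝓝 x) :=
    tendsto_pi_nhds.2 fun j => by
      simpa using tendsto_const_nhds.sub
        (tendsto_intervalIntegral_nhdsLT_zero_of_norm_le hT (h := fun _ => r j) fun _ _ => hrB j)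
  have hvar : Tendsto (fun t j => R j T - R j t) (𝓝[<] T) (𝓝 0) :=
    tendsto_pi_nhds.2 fun j => by
      have hRj := ((hRsmooth j).continuousOn.continuousWithinAt hTmem).mono_of_mem_nhdsWithin
        (Icc_mem_nhdsLT hT)
      simpa using (tendsto_const_nhds (x := R j T)).sub hRj
  have hvarpos : ∀ᶠ t in 𝓝[<] T, ∀ j, 0 < R j T - R j t := by
    filter_upwards [Ioo_mem_nhdsLT hT] with t ht j
    exact sub_pos.2 (hRmono j (Ioo_subset_Icc_self ht) hTmem ht.2)
  have hlim := hsource.neg.add (hdiscount.mul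
    (tendsto_integral_mul_prod_heatKernel hg hgrowth hmean hvar hvarpos))
  rw [neg_zero, zero_add, one_mul] at hlim
  refine hlim.congr' ?_
  filter_upwards [Ioo_mem_nhdsLT hT] with t ht
  exact (hu t ht.1.le ht.2 x).symm

/-- For every `x ∈ ℝⁿ`, `u(t,x) → g(x)` as `t → T⁻`: the Feynman–Kac
function `u` attains the terminal condition `u(T,x) = g(x)` by continuity. -/
theorem feynman_kac_terminal_condition
    (n : ℕ) (hn : 1 ≤ n) (t₀ T : ℝ) (ht₀ : 0 ≤ t₀) (hT : t₀ < T)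
    (R : Fin n → ℝ → ℝ)
    (hRsmooth : ∀ j, ContDiffOn ℝ 1 (R j) (Set.Icc t₀ T))
    (hRnonneg : ∀ j, ∀ t ∈ Set.Icc t₀ T, 0 ≤ R j t)
    (hRmono : ∀ j, StrictMonoOn (R j) (Set.Icc t₀ T))
    (hRT : ∀ j, 0 < R j T)
    (r : Fin n → ℝ → ℝ) (A₁ f : ℝ → ℝ)
    (hr : ∀ j, ContinuousOn (r j) (Set.Icc t₀ T))
    (hA₁ : ContinuousOn A₁ (Set.Icc t₀ T)) (hf : ContinuousOn f (Set.Icc t₀ T))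
    (Cr CA Cf : ℝ) (hrB : ∀ j, ∀ t ∈ Set.Icc t₀ T, |r j t| ≤ Cr)
    (hA₁B : ∀ t ∈ Set.Icc t₀ T, |A₁ t| ≤ CA) (hfB : ∀ t ∈ Set.Icc t₀ T, |f t| ≤ Cf)
    (g : (Fin n → ℝ) → ℝ) (hg : Continuous g)
    (c' lam' : ℝ) (hc' : 0 < c') (hlam' : 0 < lam')
    (hlam'' : ∀ j, lam' < (16 * R j T)⁻¹)
    (hgrowth : ∀ x : Fin n → ℝ, |g x| ≤ c' * Real.exp (lam' * ∑ j, (x j) ^ 2))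
    (u : ℝ → (Fin n → ℝ) → ℝ)
    (hu : ∀ t : ℝ, t₀ ≤ t → t < T → ∀ x : Fin n → ℝ,
      u t x = -(∫ s in t..T, Real.exp (∫ ρ in s..t, A₁ ρ) * f s)
        + Real.exp (-(∫ s in t..T, A₁ s)) *
          ∫ y : Fin n → ℝ, g y *
            ∏ j, (2 * Real.pi * (R j T - R j t)) ^ (-(1 : ℝ) / 2) *
              Real.exp (-(x j - (∫ s in t..T, r j s) - y j) ^ 2
                / (2 * (R j T - R j t)))) :
    ∀ x : Fin n → ℝ,
      Filter.Tendsto (fun t => u t x) (nhdsWithin T (Set.Iio T)) (nhds (g x)) :=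
  feynman_kac_terminal_condition_general n t₀ T hT R hRsmooth hRmono r A₁ f Cr CA Cf hrB hA₁B hfB g
    hg c' lam' hgrowth u hu
end
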